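/- For t > 0, the function F(u) := [1 - 2u e^{-u} - e^{-2u} + e^{-t}(2u - 3 + 4e^{-u} - e^{-2u})] / [(1 - e^{-t})(1 - e^{-u})^2] satisfies lim_{u→0+} F(u) = 0 and lim_{u→t-} F(u) = 1, so it is a valid cumulative distribution function on (0, t). -/

import Mathlib

/-
With `x = e^{-u}` and `a = e^{-t}` the numerator of `coalCDF t u` factors as
`(1 - a)(1 - x)² - 2(x - a)(u - (1 - x))`, so
`F(u) = 1 - 2 (e^{-u} - e^{-t}) / (1 - e^{-t}) · (u - (1 - e^{-u})) / (1 - e^{-u})²`.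
The last factor is continuous at `u = t > 0`, where the prefactor vanishes, and tends to `1/2`
as `u → 0` (one application of l'Hôpital's rule), where the prefactor tends to `1`.
-/

open Real Filter

/-- The distribution function of the coalescence time of a sampled pair in a rate-1
Yule process conditioned on `{Y_t ≥ 2}`. -/
noncomputable def coalCDF (t u : ℝ) : ℝ :=
  (1 - 2 * u * Real.exp (-u) - Real.exp (-2 * u) +
      Real.exp (-t) * (2 * u - 3 + 4 * Real.exp (-u) - Real.exp (-2 * u))) /
    ((1 - Real.exp (-t)) * (1 - Real.exp (-u)) ^ 2)

theorem one_sub_exp_neg_ne_zero {s : ℝ} (hs : s ≠ 0) : 1 - exp (-s) ≠ 0 := by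
  simpa [sub_eq_zero, eq_comm (a := (1 : ℝ))] using hs

theorem tendsto_id_sub_one_sub_exp_neg_div_sq :
    Tendsto (fun u : ℝ => (u - (1 - exp (-u))) / (1 - exp (-u)) ^ 2) (nhdsWithin 0 {0}ᶜ)
      (nhds (1 / 2)) := by
  have hexp (u : ℝ) : HasDerivAt (fun u => 1 - exp (-u)) (exp (-u)) u := by
    simpa using ((hasDerivAt_neg u).exp).const_sub 1
  have hlim_zero : Tendsto (fun u : ℝ => 1 - exp (-u)) (nhdsWithin 0 {0}ᶜ) (nhds 0) :=
    tendsto_nhdsWithin_of_tendsto_nhds <|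
      (by fun_prop : Continuous fun u : ℝ => 1 - exp (-u)).tendsto' 0 0 (by simp)
  refine HasDerivAt.lhopital_zero_nhdsNE (f' := fun u => 1 - exp (-u))
    (g' := fun u => 2 * (1 - exp (-u)) * exp (-u))
    (.of_forall fun u => ((hasDerivAt_id u).sub (hexp u)).congr_deriv (by simp))
    (.of_forall fun u => by simpa using (hexp u).fun_pow 2)
    (eventually_mem_nhdsWithin.mono fun u hu => by
      have := one_sub_exp_neg_ne_zero hu
      positivity)
    (tendsto_nhdsWithin_of_tendsto_nhds <|
      (by fun_prop : Continuous fun u : ℝ => u - (1 - exp (-u))).tendsto' 0 0 (by simp))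
    (by simpa using hlim_zero.pow 2) ?_
  have hratio : ∀ u ∈ ({0}ᶜ : Set ℝ),
      exp u / 2 = (1 - exp (-u)) / (2 * (1 - exp (-u)) * exp (-u)) := by
    intro u hu
    field_simp [one_sub_exp_neg_ne_zero hu]
    rw [← exp_add, add_neg_cancel, exp_zero]
  refine Tendsto.congr' (eventually_nhdsWithin_of_forall hratio) ?_
  simpa using ((continuous_exp.div_const 2).tendsto 0).mono_left nhdsWithin_le_nhds

theorem coalCDF_eq {t u : ℝ} (ht : t ≠ 0) (hu : u ≠ 0) :
    coalCDF t u = 1 - 2 * (exp (-u) - exp (-t)) / (1 - exp (-t)) *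
      ((u - (1 - exp (-u))) / (1 - exp (-u)) ^ 2) := by
  have hsq : exp (-2 * u) = exp (-u) ^ 2 := by rw [← exp_nat_mul]; ring_nf
  rw [coalCDF, hsq]
  field_simp [one_sub_exp_neg_ne_zero ht, one_sub_exp_neg_ne_zero hu]
  ring

/-- For `t > 0`, the function
`F(u) = [1 - 2u e^{-u} - e^{-2u} + e^{-t}(2u - 3 + 4e^{-u} - e^{-2u})]
        / [(1 - e^{-t})(1 - e^{-u})²]`
satisfies `lim_{u→0+} F(u) = 0` and `lim_{u→t-} F(u) = 1`, so it is a valid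
cumulative distribution function on `(0, t)`. -/
theorem coalCDF_boundary_limits (t : ℝ) (ht : 0 < t) :
    Tendsto (coalCDF t) (nhdsWithin 0 (Set.Ioi 0)) (nhds 0) ∧
    Tendsto (coalCDF t) (nhdsWithin t (Set.Iio t)) (nhds 1) := by
  have hne : 1 - exp (-t) ≠ 0 := one_sub_exp_neg_ne_zero ht.ne'
  set F : ℝ → ℝ := fun u => 1 - 2 * (exp (-u) - exp (-t)) / (1 - exp (-t)) *
    ((u - (1 - exp (-u))) / (1 - exp (-u)) ^ 2) with hF
  have hcoalCDF_eq : ∀ u ≠ 0, F u = coalCDF t u := fun u hu => (coalCDF_eq ht.ne' hu).symm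
  constructor
  · refine Tendsto.congr'
      (eventually_nhdsWithin_of_forall fun u (hu : 0 < u) => hcoalCDF_eq u hu.ne') ?_
    have hprefactor : Tendsto (fun u => 2 * (exp (-u) - exp (-t)) / (1 - exp (-t)))
        (nhdsWithin 0 (Set.Ioi 0)) (nhds 2) :=
      tendsto_nhdsWithin_of_tendsto_nhds <|
        (by fun_prop : Continuous fun u => 2 * (exp (-u) - exp (-t)) / (1 - exp (-t))).tendsto'
          0 2 (by field_simp; simp)
    have hratio := tendsto_id_sub_one_sub_exp_neg_div_sq.mono_left
      (nhdsWithin_mono 0 fun u (hu : 0 < u) => hu.ne')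
    convert tendsto_const_nhds.sub (hprefactor.mul hratio) using 2
    norm_num
  · have hFt : ContinuousAt F t := by
      fun_prop (disch := exact pow_ne_zero 2 hne)
    have hne_zero : ∀ᶠ u in nhdsWithin t (Set.Iio t), u ≠ 0 :=
      eventually_nhdsWithin_of_eventually_nhds (eventually_ne_nhds ht.ne')
    refine Tendsto.congr' (hne_zero.mono hcoalCDF_eq) ?_
    simpa [hF] using hFt.tendsto.mono_left nhdsWithin_le_nhds
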